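/- arXiv:1405.4745 — 3 statements merged into one kernel-verified Lean document; each statement's English description precedes it below -/
import Mathlib

section
/- Let σ be a permutation of the finite set {0,1}^p with support A ⊆ {0,1}^p. Define √σ : {0,1}^{p+1} → {0,1}^{p+1} by √σ(s⌢ε) = s⌢1 if s ∈ A and ε = 0, √σ(s⌢ε) = σ(s)⌢0 if s ∈ A and ε = 1, and √σ(s⌢ε) = s⌢ε if s ∉ A. Then √σ is a permutation of {0,1}^{p+1}, (√σ)² equals the permutation of {0,1}^{p+1} given by (x₁,...,x_{p+1}) ↦ (σ(x₁,...,x_p), x_{p+1}), and the support of √σ equals {s⌢ε : s ∈ A, ε ∈ {0,1}}. -/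
open Function

namespace Equiv.Perm

variable {α : Type*}

/-- Over `A` the map runs `(s, false) ↦ (s, true) ↦ (σ s, false)`, so two steps apply `σ` to the
first coordinate. -/
def sqrtOn (σ : Perm α) (A : Set α) [DecidablePred (· ∈ A)] (q : α × Bool) : α × Bool :=
  if q.1 ∈ A then (if q.2 = false then (q.1, true) else (σ q.1, false)) else q

variable (σ : Perm α) {A : Set α} [DecidablePred (· ∈ A)]

theorem sqrtOn_sqrtOn (hsupp : {s | σ s ≠ s} ⊆ A) (hmaps : Set.MapsTo σ A A)
    (q : α × Bool) : sqrtOn σ A (sqrtOn σ A q) = (σ q.1, q.2) := by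
  obtain ⟨s, b⟩ := q
  by_cases hs : s ∈ A
  · cases b <;> simp [sqrtOn, hs, hmaps hs]
  · have hfix : σ s = s := not_not.1 fun h => hs (hsupp h)
    simp [sqrtOn, hs, hfix]

theorem bijective_sqrtOn (hsupp : {s | σ s ≠ s} ⊆ A) (hmaps : Set.MapsTo σ A A) :
    Bijective (sqrtOn σ A) := by
  have hsq : sqrtOn σ A ∘ sqrtOn σ A = Prod.map σ id := funext (sqrtOn_sqrtOn σ hsupp hmaps)
  have hbij : Bijective (sqrtOn σ A ∘ sqrtOn σ A) := hsq ▸ σ.bijective.prodMap bijective_id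
  exact ⟨hbij.1.of_comp, hbij.2.of_comp⟩

theorem sqrtOn_ne_self_iff (q : α × Bool) : sqrtOn σ A q ≠ q ↔ q.1 ∈ A := by
  obtain ⟨s, b⟩ := q
  by_cases hs : s ∈ A <;> cases b <;> simp [sqrtOn, hs]

end Equiv.Perm

open Equiv.Perm

open Classical in
/-- The square root of a dyadic permutation: it is a permutation of `{0,1}^{p+1}`,
its square is `σ × id`, and its support is `A × {0,1}` where `A` is the support of `σ`. -/
theorem sqrt_perm_spec (p : ℕ) (σ : Equiv.Perm (Fin p → Bool)) :
    ∀ A : Set (Fin p → Bool), A = {s | σ s ≠ s} →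
    ∀ f : (Fin p → Bool) × Bool → (Fin p → Bool) × Bool,
      (f = fun q => if q.1 ∈ A then
          (if q.2 = false then (q.1, true) else (σ q.1, false)) else q) →
      Function.Bijective f ∧
      (∀ q, f (f q) = (σ q.1, q.2)) ∧
      {q | f q ≠ q} = {q : (Fin p → Bool) × Bool | q.1 ∈ A} := by
  rintro A hA f rfl
  have hsupp : {s | σ s ≠ s} ⊆ A := hA.ge
  have hmaps : Set.MapsTo σ A A := hA ▸ fun _ => set_support_apply_mem.2
  exact ⟨bijective_sqrtOn σ hsupp hmaps, sqrtOn_sqrtOn σ hsupp hmaps,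
    Set.ext (sqrtOn_ne_self_iff σ)⟩
end

section
/- Let G be a topological group that is n-Steinhaus for some fixed n ∈ ℕ: for every symmetric subset A ∋ 1 of G such that countably many left translates of A cover G, the set Aⁿ contains a neighborhood of the identity. Then every group homomorphism from G into a separable topological group is continuous. -/
/-!
Given a neighbourhood `W` of `1` in `H`, pick an open `U ∋ 1` with `(U⁻¹ U)ⁿ ⊆ W` and let
`A = φ⁻¹(U⁻¹ U)`, a symmetric set containing `1`. If `(dᵢ)` is dense in `H`, every `φ x` lies in
some `dᵢ U`; choosing `cᵢ` with `φ cᵢ ∈ dᵢ U` whenever such a point exists gives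
`φ (cᵢ⁻¹ x) ∈ U⁻¹ U`, so the translates `cᵢ A` cover `G`. The Steinhaus property then makes
`Aⁿ ⊆ φ⁻¹(W)` a neighbourhood of `1`, so `φ` is continuous at `1`, hence everywhere.
-/

open Filter Pointwise Topology

theorem exists_mem_nhds_one_pow_subset {M : Type*} [Monoid M] [TopologicalSpace M]
    [ContinuousMul M] (m : ℕ) {W : Set M} (hW : W ∈ 𝓝 1) : ∃ V ∈ 𝓝 (1 : M), V ^ m ⊆ W := by
  induction m generalizing W with
  | zero => exact ⟨Set.univ, univ_mem, by simpa using mem_of_mem_nhds hW⟩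
  | succ m ih =>
    obtain ⟨U, hU, hUW⟩ := exists_nhds_one_split hW
    obtain ⟨V, hV, hVU⟩ := ih hU
    refine ⟨V ∩ U, inter_mem hV hU, ?_⟩
    rw [pow_succ]
    rintro _ ⟨x, hx, y, hy, rfl⟩
    exact hUW x (Set.pow_subset_pow_left Set.inter_subset_left |>.trans hVU hx) y hy.2

theorem exists_isOpen_one_mem_inv_mul_pow_subset {H : Type*} [Group H] [TopologicalSpace H]
    [IsTopologicalGroup H] (n : ℕ) {W : Set H} (hW : W ∈ 𝓝 1) :
    ∃ U : Set H, IsOpen U ∧ (1 : H) ∈ U ∧ (U⁻¹ * U) ^ n ⊆ W := by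
  obtain ⟨V, hV, hVW⟩ := exists_mem_nhds_one_pow_subset (2 * n) hW
  obtain ⟨U, hUV, hUo, hU1⟩ := mem_nhds_iff.1 (inter_mem hV (inv_mem_nhds_one H hV))
  refine ⟨U, hUo, hU1, ?_⟩
  have hUV' : U⁻¹ * U ⊆ V * V :=
    Set.mul_subset_mul (Set.inv_subset.2 (hUV.trans Set.inter_subset_right))
      (hUV.trans Set.inter_subset_left)
  calc (U⁻¹ * U) ^ n ⊆ (V * V) ^ n := Set.pow_subset_pow_left hUV'
    _ = V ^ (2 * n) := by rw [← sq, ← pow_mul]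
    _ ⊆ W := hVW

theorem exists_seq_inv_mul_mem_inv_mul {X H : Type*} [Nonempty X] [Group H]
    [TopologicalSpace H] [IsTopologicalGroup H] [TopologicalSpace.SeparableSpace H] (f : X → H)
    {U : Set H} (hU : IsOpen U) (hUne : U.Nonempty) :
    ∃ c : ℕ → X, ∀ x, ∃ i, (f (c i))⁻¹ * f x ∈ U⁻¹ * U := by
  obtain ⟨d, hd⟩ := TopologicalSpace.exists_dense_seq H
  have hchoice : ∀ i, ∃ y : X, (∃ x, f x ∈ d i • U) → f y ∈ d i • U := fun i =>
    (em _).elim (fun ⟨x, hx⟩ => ⟨x, fun _ => hx⟩)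
      (fun h => ⟨Classical.arbitrary X, fun h' => (h h').elim⟩)
  choose c hc using hchoice
  refine ⟨c, fun x => ?_⟩
  obtain ⟨i, u, hu, hdu⟩ := hd.exists_mem_open (hU.inv.smul (f x)) (hUne.inv.smul_set)
  have hx : f x ∈ d i • U := ⟨u⁻¹, hu, by rw [← hdu]; simp [mul_assoc]⟩
  obtain ⟨v, hv, hcv⟩ := hc i ⟨x, hx⟩
  obtain ⟨w, hw, hxw⟩ := hx
  refine ⟨i, ?_⟩
  rw [← hcv, ← hxw]
  exact ⟨v⁻¹, Set.inv_mem_inv.2 hv, w, hw, by simp [mul_assoc]⟩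

/-- The Rosendal–Solecki criterion: an `n`-Steinhaus topological group has the automatic
continuity property. -/
theorem steinhaus_implies_automatic_continuity {G : Type*} [Group G] [TopologicalSpace G]
    [IsTopologicalGroup G] (n : ℕ)
    (hSteinhaus : ∀ A : Set G, (1 : G) ∈ A → A = A⁻¹ →
      (∃ g : ℕ → G, (⋃ i, g i • A) = Set.univ) → A ^ n ∈ nhds (1 : G)) :
    ∀ (H : Type*) [Group H] [TopologicalSpace H] [IsTopologicalGroup H]
      [TopologicalSpace.SeparableSpace H] (φ : G →* H), Continuous φ := by
  intro H _ _ _ _ φ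
  refine continuous_of_continuousAt_one φ fun W hW => ?_
  rw [map_one] at hW
  obtain ⟨U, hUo, hU1, hUW⟩ := exists_isOpen_one_mem_inv_mul_pow_subset n hW
  obtain ⟨c, hc⟩ := exists_seq_inv_mul_mem_inv_mul φ hUo ⟨1, hU1⟩
  have hA1 : (1 : G) ∈ φ ⁻¹' (U⁻¹ * U) := by
    simpa using Set.mul_mem_mul (Set.inv_mem_inv.2 hU1) hU1
  have hAsymm : φ ⁻¹' (U⁻¹ * U) = (φ ⁻¹' (U⁻¹ * U))⁻¹ := by
    ext x
    rw [Set.mem_inv, Set.mem_preimage, Set.mem_preimage, map_inv, ← Set.mem_inv, mul_inv_rev,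
      inv_inv]
  have hAcover : ⋃ i, c i • φ ⁻¹' (U⁻¹ * U) = Set.univ :=
    Set.eq_univ_of_forall fun x => Set.mem_iUnion.2 <| (hc x).imp fun i hi => by
      simpa [Set.mem_smul_set_iff_inv_smul_mem] using hi
  exact Filter.mem_map.2 <| mem_of_superset (hSteinhaus _ hA1 hAsymm ⟨c, hAcover⟩)
    ((Set.preimage_pow_subset φ _ n).trans (Set.preimage_mono hUW))
end

section
/- A countable product of extremely amenable topological groups is extremely amenable, and more specifically: if R is a pmp equivalence relation with invariant decomposition X = ⊔_n X_n into R-invariant sets, then [R] is topologically isomorphic to the product ∏_n [R_{|X_n}]; if each [R_{|X_n}] is extremely amenable then so is [R]. -/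
open MeasureTheory

def fullGroup {X : Type*} [MeasurableSpace X] (μ : Measure X)
    (R : X → X → Prop) (hR : Equivalence R) : Subgroup (Equiv.Perm X) where
  carrier := {T | MeasurePreserving T μ μ ∧ MeasurePreserving T.symm μ μ ∧ ∀ x, R x (T x)}
  one_mem' := by
    refine ⟨?_, ?_, fun x => hR.refl x⟩
    · simpa using MeasurePreserving.id μ
    · exact MeasurePreserving.id μ
  mul_mem' := by
    rintro S T ⟨hS1, hS2, hS3⟩ ⟨hT1, hT2, hT3⟩
    refine ⟨?_, ?_, fun x => hR.trans (hT3 x) (hS3 (T x))⟩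
    · simpa [Equiv.Perm.coe_mul] using hS1.comp hT1
    · have h : ⇑(S * T).symm = ⇑T.symm ∘ ⇑S.symm := by ext x; rfl
      rw [h]; exact hT2.comp hS2
  inv_mem' := by
    rintro T ⟨hT1, hT2, hT3⟩
    refine ⟨?_, ?_, fun x => ?_⟩
    · simpa [Equiv.Perm.inv_def] using hT2
    · simpa [Equiv.Perm.inv_def] using hT1
    · have h := hT3 (T.symm x)
      simp only [Equiv.apply_symm_apply] at h
      exact hR.symm h

noncomputable def du {X : Type*} [MeasurableSpace X] (μ : Measure X)
    (S T : Equiv.Perm X) : ℝ := (μ {x | S x ≠ T x}).toReal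

noncomputable def uniformTopology {X : Type*} [MeasurableSpace X] (μ : Measure X)
    (G : Subgroup (Equiv.Perm X)) : TopologicalSpace G :=
  TopologicalSpace.generateFrom
    {s | ∃ (T : G) (r : ℝ), s = {S : G | du μ (S : Equiv.Perm X) (T : Equiv.Perm X) < r}}

def invariantAlgebra {X : Type*} [MeasurableSpace X] (R : X → X → Prop) :
    MeasurableSpace X where
  MeasurableSet' s := MeasurableSet s ∧ ∀ ⦃x y⦄, R x y → (x ∈ s ↔ y ∈ s)
  measurableSet_empty := ⟨MeasurableSet.empty, by simp⟩
  measurableSet_compl := fun s hs =>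
    ⟨hs.1.compl, fun x y h => by simp [Set.mem_compl_iff, hs.2 h]⟩
  measurableSet_iUnion := fun f hf =>
    ⟨MeasurableSet.iUnion fun i => (hf i).1, fun x y h => by
      simp only [Set.mem_iUnion]; exact exists_congr fun i => (hf i).2 h⟩

noncomputable def condMeasure {X : Type*} [MeasurableSpace X] (μ : Measure X)
    (R : X → X → Prop) (A : Set X) : X → ℝ :=
  μ[A.indicator (fun _ => (1 : ℝ)) | invariantAlgebra R]

noncomputable def dC {X : Type*} [MeasurableSpace X] (μ : Measure X)
    (R : X → X → Prop) (S T : Equiv.Perm X) : ℝ :=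
  (eLpNorm (condMeasure μ R {x | (S⁻¹ * T) x ≠ x}) ⊤ μ).toReal

noncomputable def dCTopology {X : Type*} [MeasurableSpace X] (μ : Measure X)
    (R : X → X → Prop) (G : Subgroup (Equiv.Perm X)) : TopologicalSpace G :=
  TopologicalSpace.generateFrom
    {s | ∃ (T : G) (r : ℝ), s = {S : G | dC μ R (T : Equiv.Perm X) (S : Equiv.Perm X) < r}}

/-- Extreme amenability of a topological group: every continuous action on a nonempty
compact Hausdorff space has a fixed point. -/
def ExtremelyAmenable (G : Type*) [Group G] [TopologicalSpace G] : Prop :=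
  ∀ (K : Type) [TopologicalSpace K] [CompactSpace K] [T2Space K] [Nonempty K]
    (act : G → K → K), act 1 = id → (∀ g h, act (g * h) = act g ∘ act h) →
    Continuous (fun p : G × K => act p.1 p.2) → ∃ p, ∀ g, act g p = p

/-- The restriction of a relation to a subset. -/
def restrictRel {X : Type*} (R : X → X → Prop) (A : Set X) : ↥A → ↥A → Prop :=
  fun a b => R ↑a ↑b

theorem restrictRel_equivalence {X : Type*} {R : X → X → Prop} (hR : Equivalence R)
    (A : Set X) : Equivalence (restrictRel R A) :=
  ⟨fun a => hR.refl ↑a, fun h => hR.symm h, fun h h' => hR.trans h h'⟩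

open Filter Topology Function

/-!
A continuous action of `∏ₙ Gₙ` on a compact Hausdorff space `K` is handled one factor at a time:
the points fixed by `G₀, …, G_{N-1}` form a closed set which `G_N` preserves (distinct factors
commute), so extreme amenability of `G_N` produces a point of it fixed by `G_N` as well. By
compactness some point is fixed by every factor, hence by the finitely supported elements, which
are dense, hence by everything.

Every element of `[R]` preserves each invariant piece `Xₙ`, so restricting to the pieces is an
isomorphism `[R] ≃* ∏ₙ [R|Xₙ]` whose inverse glues permutations of the pieces together.
Restriction is 1-Lipschitz for the uniform metric, and `d(glue U, glue V) ≤ ∑ₙ d(Uₙ, Vₙ)`, a series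
dominated by `∑ₙ μ(Xₙ) < ∞`, so gluing is continuous as well. Extreme amenability of `[R]` then
follows along the continuous surjection `∏ₙ [R|Xₙ] → [R]`.
-/

section ExtremeAmenability

variable {G : Type*} [Group G] [TopologicalSpace G]

theorem extremelyAmenable_iff_forall_mulAction :
    ExtremelyAmenable G ↔ ∀ (K : Type) [TopologicalSpace K] [CompactSpace K] [T2Space K]
      [Nonempty K] [MulAction G K] [ContinuousSMul G K], ∃ p : K, ∀ g : G, g • p = p := by
  refine ⟨fun hG K _ _ _ _ _ _ => ?_, fun h K _ _ _ _ act hone hmul hcont => ?_⟩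
  · exact hG K (fun g p => g • p) (funext (one_smul G)) (fun g h => funext (mul_smul g h))
      continuous_smul
  · let : MulAction G K :=
      { smul := act
        one_smul := congrFun hone
        mul_smul := fun g h => congrFun (hmul g h) }
    have : ContinuousSMul G K := ⟨hcont⟩
    exact h K

theorem ExtremelyAmenable.exists_forall_smul_eq_mem (hG : ExtremelyAmenable G)
    {H : Type*} [Group H] [TopologicalSpace H] {K : Type} [TopologicalSpace K] [T2Space K]
    [MulAction H K] [ContinuousSMul H K] {φ : G →* H} (hφ : Continuous φ) {C : Set K}
    (hC : IsCompact C) (hne : C.Nonempty) (hmaps : ∀ g, ∀ c ∈ C, φ g • c ∈ C) :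
    ∃ p ∈ C, ∀ g, φ g • p = p := by
  have : CompactSpace C := isCompact_iff_compactSpace.mp hC
  have : Nonempty C := hne.to_subtype
  obtain ⟨p, hp⟩ := hG C (fun g c => ⟨φ g • c, hmaps g c c.2⟩)
    (funext fun c => Subtype.ext (by simp))
    (fun g h => funext fun c => Subtype.ext (by simp [mul_smul]))
    (((hφ.comp continuous_fst).smul (continuous_subtype_val.comp continuous_snd)).subtype_mk _)
  exact ⟨p, p.2, fun g => congrArg Subtype.val (hp g)⟩

theorem ExtremelyAmenable.of_surjective (hG : ExtremelyAmenable G) {H : Type*} [Group H]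
    [TopologicalSpace H] {φ : G →* H} (hφ : Continuous φ) (hsurj : Surjective φ) :
    ExtremelyAmenable H := by
  refine extremelyAmenable_iff_forall_mulAction.2 fun K _ _ _ _ _ _ => ?_
  obtain ⟨p, -, hp⟩ := hG.exists_forall_smul_eq_mem hφ (isCompact_univ (X := K))
    Set.univ_nonempty fun _ _ _ => Set.mem_univ _
  exact ⟨p, hsurj.forall.2 hp⟩

theorem Pi.mem_of_isClosed_of_mulSingle_mem {G : ℕ → Type*} [∀ n, Monoid (G n)]
    [∀ n, TopologicalSpace (G n)] {S : Submonoid (∀ n, G n)} (hS : IsClosed (S : Set (∀ n, G n)))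
    (hsingle : ∀ k (a : G k), Pi.mulSingle k a ∈ S) (g : ∀ n, G n) : g ∈ S := by
  let trunc : ℕ → ∀ n, G n := fun N k => if k < N then g k else 1
  have trunc_succ (N : ℕ) : trunc (N + 1) = trunc N * Pi.mulSingle N (g N) := by
    funext k
    rcases lt_trichotomy k N with hk | rfl | hk
    · simp [trunc, hk, Nat.lt_succ_of_lt hk, Pi.mulSingle_eq_of_ne hk.ne]
    · simp [trunc]
    · simp [trunc, hk.not_gt, Nat.not_lt.2 hk, Pi.mulSingle_eq_of_ne hk.ne']
  have trunc_mem (N : ℕ) : trunc N ∈ S := by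
    induction N with
    | zero => exact (funext fun k => if_neg k.not_lt_zero : trunc 0 = 1) ▸ S.one_mem
    | succ N ih => rw [trunc_succ]; exact S.mul_mem ih (hsingle N (g N))
  have tendsto_trunc : Tendsto trunc atTop (𝓝 g) :=
    tendsto_pi_nhds.2 fun k => tendsto_atTop_of_eventually_const (i₀ := k + 1)
      fun N hN => if_pos (by omega)
  exact hS.mem_of_tendsto tendsto_trunc (Eventually.of_forall trunc_mem)

theorem ExtremelyAmenable.pi {G : ℕ → Type*} [∀ n, Group (G n)] [∀ n, TopologicalSpace (G n)]
    (hG : ∀ n, ExtremelyAmenable (G n)) : ExtremelyAmenable (∀ n, G n) := by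
  refine extremelyAmenable_iff_forall_mulAction.2 fun K _ _ _ _ _ _ => ?_
  let C : ℕ → Set K := fun N => ⋂ k < N, ⋂ a : G k, {p | Pi.mulSingle k a • p = p}
  have hC_closed (N : ℕ) : IsClosed (C N) :=
    isClosed_biInter fun k _ => isClosed_iInter fun a =>
      isClosed_eq (continuous_const_smul _) continuous_id
  have hC_anti : Antitone C := fun M N hMN =>
    Set.biInter_mono (fun k hk => lt_of_lt_of_le hk hMN) fun _ _ => subset_rfl
  have hC_nonempty (N : ℕ) : (C N).Nonempty := by
    induction N with
    | zero => simp [C]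
    | succ N ih =>
      have hmaps : ∀ (b : G N), ∀ p ∈ C N, Pi.mulSingle N b • p ∈ C N := by
        intro b p hp
        simp only [C, Set.mem_iInter, Set.mem_ofPred_eq] at hp ⊢
        intro k hk a
        rw [← mul_smul, ((Pi.mulSingle_commute hk.ne a b).eq), mul_smul, hp k hk a]
      obtain ⟨p, hpC, hp⟩ := (hG N).exists_forall_smul_eq_mem
        (φ := MonoidHom.mulSingle G N) (continuous_mulSingle N)
        (hC_closed N).isCompact ih hmaps
      refine ⟨p, ?_⟩
      simp only [C, Set.mem_iInter, Set.mem_ofPred_eq] at hpC ⊢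
      intro k hk a
      rcases Nat.lt_succ_iff_lt_or_eq.1 hk with hk | rfl
      · exact hpC k hk a
      · exact hp a
  obtain ⟨p, hp⟩ := IsCompact.nonempty_iInter_of_sequence_nonempty_isCompact_isClosed C
    (fun N => hC_anti N.le_succ) hC_nonempty (hC_closed 0).isCompact hC_closed
  have hsingle (k : ℕ) (a : G k) : Pi.mulSingle k a ∈ MulAction.stabilizerSubmonoid _ p := by
    have hpC := Set.mem_iInter.1 hp (k + 1)
    simp only [C, Set.mem_iInter] at hpC
    exact hpC k k.lt_succ_self a
  exact ⟨p, fun g => Pi.mem_of_isClosed_of_mulSingle_mem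
    (isClosed_eq (continuous_id.smul continuous_const) continuous_const) hsingle g⟩

end ExtremeAmenability

section Partition

variable {X ι : Type*} {Xn : ι → Set X}

theorem existsUnique_mem_of_pairwise_disjoint (hdisj : Pairwise (Disjoint on Xn))
    (hcover : ⋃ i, Xn i = Set.univ) (x : X) : ∃! i, x ∈ Xn i :=
  existsUnique_of_exists_of_unique (Set.mem_iUnion.1 (hcover ▸ Set.mem_univ x))
    fun _ _ hi hj => hdisj.eq (Set.not_disjoint_iff.2 ⟨x, hi, hj⟩)

theorem pairwise_disjoint_of_existsUnique_mem (hX : ∀ x, ∃! i, x ∈ Xn i) :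
    Pairwise (Disjoint on Xn) :=
  fun _ _ hij => Set.disjoint_left.2 fun x hi hj => hij ((hX x).unique hi hj)

namespace Equiv.Perm

noncomputable def glue (hX : ∀ x, ∃! i, x ∈ Xn i) (T : ∀ i, Perm (Xn i)) : Perm X :=
  (Set.sigmaEquiv Xn hX).permCongr (Equiv.sigmaCongrRight T)

variable (hX : ∀ x, ∃! i, x ∈ Xn i)

theorem glue_apply (T : ∀ i, Perm (Xn i)) {x : X} {i : ι} (hx : x ∈ Xn i) :
    glue hX T x = T i ⟨x, hx⟩ := by
  have : (Set.sigmaEquiv Xn hX).symm x = ⟨i, x, hx⟩ := (Set.sigmaEquiv Xn hX).symm_apply_eq.2 rfl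
  rw [glue, Equiv.permCongr_apply, this]
  rfl

theorem glue_symm (T : ∀ i, Perm (Xn i)) : (glue hX T).symm = glue hX fun i => (T i).symm :=
  rfl

theorem glue_subtypePerm (T : Perm X) (hT : ∀ i x, T x ∈ Xn i ↔ x ∈ Xn i) :
    glue hX (fun i => T.subtypePerm (hT i)) = T :=
  Equiv.ext fun x => by
    obtain ⟨i, hx⟩ := (hX x).exists
    rw [glue_apply hX _ hx]
    rfl

theorem subtypePerm_glue (T : ∀ i, Perm (Xn i)) (i : ι) (h : ∀ x, glue hX T x ∈ Xn i ↔ x ∈ Xn i) :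
    (glue hX T).subtypePerm h = T i :=
  Equiv.ext fun x => Subtype.ext (glue_apply hX T x.2)

end Equiv.Perm

end Partition

section MeasurePreserving

variable {X ι : Type*} [MeasurableSpace X] {μ : Measure X}

theorem MeasureTheory.MeasurePreserving.subtypePerm {s : Set X} (hs : MeasurableSet s)
    {T : Equiv.Perm X} (hT : MeasurePreserving T μ μ) (h : ∀ x, T x ∈ s ↔ x ∈ s) :
    MeasurePreserving (T.subtypePerm h) (μ.comap (↑)) (μ.comap (↑)) := by
  have hT_meas : Measurable (T.subtypePerm h) :=
    (hT.measurable.comp measurable_subtype_coe).subtype_mk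
  have himage (t : Set s) : (↑) '' (T.subtypePerm h ⁻¹' t) = T ⁻¹' ((↑) '' t) := by
    ext x
    constructor
    · rintro ⟨a, ha, rfl⟩
      exact ⟨_, ha, rfl⟩
    · rintro ⟨b, hb, hbx⟩
      have hx : x ∈ s := (h x).1 (hbx ▸ b.2)
      refine ⟨⟨x, hx⟩, ?_, rfl⟩
      rwa [Set.mem_preimage, show T.subtypePerm h ⟨x, hx⟩ = b from Subtype.ext hbx.symm]
  refine ⟨hT_meas, Measure.ext fun t ht => ?_⟩
  rw [Measure.map_apply hT_meas ht, comap_subtype_coe_apply hs,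
    comap_subtype_coe_apply hs, himage,
    hT.measure_preimage (hs.subtype_image ht).nullMeasurableSet]

theorem MeasureTheory.measurePreserving_of_partition [Countable ι] {Xn : ι → Set X}
    (hmeas : ∀ i, MeasurableSet (Xn i)) (hX : ∀ x, ∃! i, x ∈ Xn i) {f : X → X}
    {g : ∀ i, Xn i → Xn i} (hg : ∀ i, MeasurePreserving (g i) (μ.comap (↑)) (μ.comap (↑)))
    (hfg : ∀ i (x : Xn i), f x = g i x) : MeasurePreserving f μ μ := by
  have hcover : ⋃ i, Xn i = Set.univ := Set.eq_univ_of_forall fun x =>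
    Set.mem_iUnion.2 (hX x).exists
  have hf : Measurable f := by
    have : f = Set.liftCover Xn (fun i x => (g i x : X)) (fun i j x hi hj => by
        rw [← hfg, ← hfg]) hcover :=
      funext fun x => by
        obtain ⟨i, hx⟩ := (hX x).exists
        rw [Set.liftCover_of_mem hx, ← hfg]
    rw [this]
    exact measurable_liftCover _ hmeas _ (fun i => measurable_subtype_coe.comp (hg i).measurable)
      _ _
  have hμ : Measure.sum (fun i => (μ.comap ((↑) : Xn i → X)).map (↑)) = μ := by
    have hsum := Measure.restrict_iUnion (μ := μ) (pairwise_disjoint_of_existsUnique_mem hX) hmeas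
    rw [hcover, Measure.restrict_univ] at hsum
    conv_rhs => rw [hsum]
    exact congrArg Measure.sum (funext fun i => map_comap_subtype_coe (hmeas i) μ)
  refine ⟨hf, ?_⟩
  conv_lhs => rw [← hμ]
  rw [Measure.map_sum hf.aemeasurable]
  conv_rhs => rw [← hμ]
  refine congrArg Measure.sum (funext fun i => ?_)
  have hcomm : f ∘ (↑) = (↑) ∘ g i := funext (hfg i)
  rw [Measure.map_map hf measurable_subtype_coe, hcomm,
    ← Measure.map_map measurable_subtype_coe (hg i).measurable, (hg i).map_eq]

end MeasurePreserving

section UniformMetric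

variable {X : Type*} [MeasurableSpace X] (μ : Measure X)

@[simp]
theorem du_self (S : Equiv.Perm X) : du μ S S = 0 := by
  simp [du]

theorem du_comm (S T : Equiv.Perm X) : du μ S T = du μ T S := by
  simp_rw [du, ne_comm]

variable [IsFiniteMeasure μ]

theorem du_triangle (S T U : Equiv.Perm X) : du μ S U ≤ du μ S T + du μ T U := by
  have hsub : {x | S x ≠ U x} ⊆ {x | S x ≠ T x} ∪ {x | T x ≠ U x} := fun x hx =>
    or_iff_not_imp_left.2 fun hST hTU => hx ((not_not.1 hST).trans hTU)
  exact ENNReal.toReal_le_add ((measure_mono hsub).trans (measure_union_le _ _))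
    (measure_ne_top μ _) (measure_ne_top μ _)

theorem isOpen_uniformTopology_iff {G : Subgroup (Equiv.Perm X)} {s : Set G} :
    IsOpen[uniformTopology μ G] s ↔ ∀ S ∈ s, ∃ ε > 0, ∀ T : G, du μ S T < ε → T ∈ s := by
  let := uniformTopology μ G
  constructor
  · intro hs
    induction hs with
    | basic s hs =>
      obtain ⟨T, r, rfl⟩ := hs
      intro S (hS : du μ S T < r)
      refine ⟨r - du μ S T, sub_pos.2 hS, fun S' hS' => ?_⟩
      calc du μ S' T ≤ du μ S' S + du μ S T := du_triangle μ _ _ _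
        _ < r := by rw [du_comm μ S']; linarith
    | univ => exact fun _ _ => ⟨1, one_pos, fun _ _ => trivial⟩
    | inter s t _ _ hs ht =>
      rintro S ⟨hSs, hSt⟩
      obtain ⟨ε, hε, hεs⟩ := hs S hSs
      obtain ⟨δ, hδ, hδt⟩ := ht S hSt
      exact ⟨min ε δ, lt_min hε hδ, fun T hT =>
        ⟨hεs T (hT.trans_le (min_le_left _ _)), hδt T (hT.trans_le (min_le_right _ _))⟩⟩
    | sUnion F _ hF =>
      rintro S ⟨t, htF, hSt⟩
      obtain ⟨ε, hε, hεt⟩ := hF t htF S hSt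
      exact ⟨ε, hε, fun T hT => ⟨t, htF, hεt T hT⟩⟩
  · intro h
    refine isOpen_iff_forall_mem_open.2 fun S hS => ?_
    obtain ⟨ε, hε, hεs⟩ := h S hS
    refine ⟨{T | du μ T S < ε}, fun T hT => hεs T ?_,
      TopologicalSpace.GenerateOpen.basic _ ⟨S, ε, rfl⟩, ?_⟩
    · rwa [du_comm]
    · simpa using hε

noncomputable def uniformPseudoMetricSpace (G : Subgroup (Equiv.Perm X)) : PseudoMetricSpace G :=
  @PseudoMetricSpace.ofDistTopology G (uniformTopology μ G) (fun S T => du μ S T)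
    (fun S => du_self μ S) (fun S T => du_comm μ S T) (fun S T U => du_triangle μ S T U)
    fun _ => isOpen_uniformTopology_iff μ

noncomputable instance (R : X → X → Prop) (hR : Equivalence R) :
    PseudoMetricSpace (fullGroup μ R hR) :=
  uniformPseudoMetricSpace μ _

end UniformMetric

section FullGroup

variable {X ι : Type*} [MeasurableSpace X] {μ : Measure X} {R : X → X → Prop}
  {hR : Equivalence R}

noncomputable abbrev restrictFullGroup (μ : Measure X) (hR : Equivalence R) (s : Set X) :
    Subgroup (Equiv.Perm s) :=
  fullGroup (μ.comap (↑)) (restrictRel R s) (restrictRel_equivalence hR s)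

theorem mem_iff_of_mem_fullGroup {s : Set X} (hs : ∀ x y, R x y → (x ∈ s ↔ y ∈ s))
    {T : Equiv.Perm X} (hT : T ∈ fullGroup μ R hR) (x : X) : T x ∈ s ↔ x ∈ s :=
  (hs x (T x) (hT.2.2 x)).symm

theorem subtypePerm_mem_restrictFullGroup {s : Set X} (hs : MeasurableSet s) {T : Equiv.Perm X}
    (hT : T ∈ fullGroup μ R hR) (h : ∀ x, T x ∈ s ↔ x ∈ s) :
    T.subtypePerm h ∈ restrictFullGroup μ hR s :=
  ⟨hT.1.subtypePerm hs h,
    hT.2.1.subtypePerm hs fun x => by rw [← h, Equiv.apply_symm_apply],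
    fun x => hT.2.2 x⟩

theorem Equiv.Perm.glue_mem_fullGroup [Countable ι] {Xn : ι → Set X}
    (hmeas : ∀ i, MeasurableSet (Xn i)) (hX : ∀ x, ∃! i, x ∈ Xn i) {S : ∀ i, Perm (Xn i)}
    (hS : ∀ i, S i ∈ restrictFullGroup μ hR (Xn i)) : glue hX S ∈ fullGroup μ R hR := by
  refine ⟨measurePreserving_of_partition hmeas hX (fun i => (hS i).1)
      fun i x => glue_apply hX S x.2,
    measurePreserving_of_partition hmeas hX (fun i => (hS i).2.1)
      fun i x => by rw [glue_symm]; exact glue_apply hX _ x.2, fun x => ?_⟩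
  obtain ⟨i, hx⟩ := (hX x).exists
  rw [glue_apply hX S hx]
  exact (hS i).2.2 ⟨x, hx⟩

variable (μ hR) in
noncomputable def fullGroupEquivPi [Countable ι] {Xn : ι → Set X}
    (hmeas : ∀ i, MeasurableSet (Xn i)) (hX : ∀ x, ∃! i, x ∈ Xn i)
    (hinv : ∀ i x y, R x y → (x ∈ Xn i ↔ y ∈ Xn i)) :
    fullGroup μ R hR ≃* ∀ i, restrictFullGroup μ hR (Xn i) where
  toFun T i := ⟨T.1.subtypePerm (mem_iff_of_mem_fullGroup (hinv i) T.2),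
    subtypePerm_mem_restrictFullGroup (hmeas i) T.2 _⟩
  invFun S := ⟨Equiv.Perm.glue hX fun i => (S i).1,
    Equiv.Perm.glue_mem_fullGroup hmeas hX fun i => (S i).2⟩
  left_inv T := Subtype.ext <|
    Equiv.Perm.glue_subtypePerm hX T.1 fun i => mem_iff_of_mem_fullGroup (hinv i) T.2
  right_inv S := funext fun i => Subtype.ext <| Equiv.Perm.subtypePerm_glue hX _ i <|
    mem_iff_of_mem_fullGroup (hinv i) (Equiv.Perm.glue_mem_fullGroup hmeas hX fun i => (S i).2)
  map_mul' _ _ := rfl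

end FullGroup

section Continuity

variable {X ι : Type*} [MeasurableSpace X] {μ : Measure X} [IsFiniteMeasure μ]

theorem du_le_measure_univ (S T : Equiv.Perm X) : du μ S T ≤ (μ Set.univ).toReal :=
  ENNReal.toReal_mono (measure_ne_top μ _) (measure_mono (Set.subset_univ _))

theorem du_subtypePerm_le {s : Set X} (hs : MeasurableSet s) {S T : Equiv.Perm X}
    (hS : ∀ x, S x ∈ s ↔ x ∈ s) (hT : ∀ x, T x ∈ s ↔ x ∈ s) :
    du (μ.comap (↑)) (S.subtypePerm hS) (T.subtypePerm hT) ≤ du μ S T := by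
  rw [du, du, comap_subtype_coe_apply hs]
  refine ENNReal.toReal_mono (measure_ne_top μ _) (measure_mono ?_)
  rintro _ ⟨x, hx, rfl⟩
  exact fun h => hx (Subtype.ext h)

variable [Countable ι] {Xn : ι → Set X} (hmeas : ∀ i, MeasurableSet (Xn i))
  (hX : ∀ x, ∃! i, x ∈ Xn i)
include hmeas hX

theorem tsum_measure_ne_top : ∑' i, μ (Xn i) ≠ ⊤ := by
  rw [← measure_iUnion (pairwise_disjoint_of_existsUnique_mem hX) hmeas]
  exact measure_ne_top μ _

theorem du_glue_le_tsum (S T : ∀ i, Equiv.Perm (Xn i)) :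
    du μ (Equiv.Perm.glue hX S) (Equiv.Perm.glue hX T)
      ≤ ∑' i, du (μ.comap ((↑) : Xn i → X)) (S i) (T i) := by
  let D i : Set X := (↑) '' {a : Xn i | S i a ≠ T i a}
  have hsub : {x | Equiv.Perm.glue hX S x ≠ Equiv.Perm.glue hX T x} ⊆ ⋃ i, D i := fun x hx => by
    obtain ⟨i, hxi⟩ := (hX x).exists
    rw [Set.mem_ofPred_eq, Equiv.Perm.glue_apply hX S hxi, Equiv.Perm.glue_apply hX T hxi] at hx
    exact Set.mem_iUnion.2 ⟨i, ⟨x, hxi⟩, fun h => hx (congrArg _ h), rfl⟩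
  have hfin : ∑' i, μ (D i) ≠ ⊤ := ne_top_of_le_ne_top (tsum_measure_ne_top hmeas hX)
    (ENNReal.tsum_le_tsum fun i => measure_mono (Subtype.coe_image_subset _ _))
  calc du μ (Equiv.Perm.glue hX S) (Equiv.Perm.glue hX T) ≤ (∑' i, μ (D i)).toReal :=
        ENNReal.toReal_mono hfin ((measure_mono hsub).trans (measure_iUnion_le D))
    _ = ∑' i, du (μ.comap ((↑) : Xn i → X)) (S i) (T i) := by
        rw [ENNReal.tsum_toReal_eq fun i => measure_ne_top μ _]
        simp only [du, comap_subtype_coe_apply (hmeas _), D]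

variable {R : X → X → Prop} {hR : Equivalence R} (hinv : ∀ i x y, R x y → (x ∈ Xn i ↔ y ∈ Xn i))

theorem continuous_fullGroupEquivPi : Continuous (fullGroupEquivPi μ hR hmeas hX hinv) :=
  continuous_pi fun i => (LipschitzWith.mk_one fun S T => du_subtypePerm_le (hmeas i)
    (mem_iff_of_mem_fullGroup (hinv i) S.2) (mem_iff_of_mem_fullGroup (hinv i) T.2)).continuous

theorem continuous_fullGroupEquivPi_symm :
    Continuous (fullGroupEquivPi μ hR hmeas hX hinv).symm := by
  refine continuous_iff_continuousAt.2 fun V => tendsto_iff_dist_tendsto_zero.2 ?_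
  have hbound (i : ι) (U : ∀ i, restrictFullGroup μ hR (Xn i)) :
      ‖dist (U i) (V i)‖ ≤ (μ (Xn i)).toReal := by
    have hXi : μ.comap ((↑) : Xn i → X) Set.univ = μ (Xn i) := by
      rw [comap_subtype_coe_apply (hmeas i), Set.image_univ, Subtype.range_coe]
    rw [Real.norm_of_nonneg dist_nonneg, ← hXi]
    exact du_le_measure_univ _ _
  have hcont : Continuous fun U : ∀ i, restrictFullGroup μ hR (Xn i) => ∑' i, dist (U i) (V i) :=
    continuous_tsum (fun i => (continuous_apply i).dist continuous_const)
      (ENNReal.summable_toReal (tsum_measure_ne_top hmeas hX)) hbound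
  have hV : ∑' i, dist (V i) (V i) = 0 := by simp
  exact squeeze_zero (fun _ => dist_nonneg) (fun U => du_glue_le_tsum hmeas hX _ _)
    (hV ▸ hcont.tendsto V)

end Continuity

/-- A countable product of extremely amenable groups is extremely amenable; and if
`X = ⊔ₙ Xₙ` is a decomposition into `R`-invariant sets, then `[R]` is topologically
isomorphic to `∏ₙ [R|Xₙ]`, so that extreme amenability of each factor implies that
of `[R]`. -/
theorem product_extremely_amenable_and_fullGroup_decomposition :
    (∀ (G : ℕ → Type) [∀ n, Group (G n)] [∀ n, TopologicalSpace (G n)],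
      (∀ n, ExtremelyAmenable (G n)) → ExtremelyAmenable (∀ n, G n)) ∧
    (∀ (X : Type) (_ : MeasurableSpace X) (μ : Measure X), IsProbabilityMeasure μ →
      ∀ (R : X → X → Prop) (hR : Equivalence R),
      (∃ T : ℕ → Equiv.Perm X, (∀ n, MeasurePreserving (T n) μ μ) ∧
        ∀ x y, R x y ↔ ∃ n, T n x = y) →
      ∀ (Xn : ℕ → Set X), (∀ n, MeasurableSet (Xn n)) →
      (∀ m n, m ≠ n → Disjoint (Xn m) (Xn n)) → (⋃ n, Xn n) = Set.univ →
      (∀ n x y, R x y → (x ∈ Xn n ↔ y ∈ Xn n)) →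
      ∃ e : ↥(fullGroup μ R hR) ≃*
          (∀ n, ↥(fullGroup (μ.comap (Subtype.val : ↥(Xn n) → X))
            (restrictRel R (Xn n)) (restrictRel_equivalence hR (Xn n)))),
        @Continuous _ _ (uniformTopology μ (fullGroup μ R hR))
          (@Pi.topologicalSpace _ _ fun n =>
            uniformTopology (μ.comap (Subtype.val : ↥(Xn n) → X))
              (fullGroup _ _ (restrictRel_equivalence hR (Xn n)))) ⇑e ∧
        @Continuous _ _
          (@Pi.topologicalSpace _ _ fun n =>
            uniformTopology (μ.comap (Subtype.val : ↥(Xn n) → X))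
              (fullGroup _ _ (restrictRel_equivalence hR (Xn n))))
          (uniformTopology μ (fullGroup μ R hR)) ⇑e.symm ∧
        ((∀ n, @ExtremelyAmenable
            ↥(fullGroup (μ.comap (Subtype.val : ↥(Xn n) → X))
              (restrictRel R (Xn n)) (restrictRel_equivalence hR (Xn n))) _
            (uniformTopology (μ.comap (Subtype.val : ↥(Xn n) → X))
              (fullGroup _ _ (restrictRel_equivalence hR (Xn n))))) →
          @ExtremelyAmenable ↥(fullGroup μ R hR) _
            (uniformTopology μ (fullGroup μ R hR)))) := by
  refine ⟨fun G _ _ => ExtremelyAmenable.pi, ?_⟩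
  intro X _ μ _ R hR _ Xn hmeas hdisj hcover hinv
  have hX := existsUnique_mem_of_pairwise_disjoint (fun m n hmn => hdisj m n hmn) hcover
  let e := fullGroupEquivPi μ hR hmeas hX hinv
  have hsymm : Continuous e.symm := continuous_fullGroupEquivPi_symm hmeas hX hinv
  exact ⟨e, continuous_fullGroupEquivPi hmeas hX hinv, hsymm, fun hEA =>
    (ExtremelyAmenable.pi hEA).of_surjective (φ := e.symm.toMonoidHom) hsymm e.symm.surjective⟩
end
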